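/- Let Y (horses, with |Y| = M) and X (signals) be finite sets and P(x^n, y^n) a joint probability distribution on X^n × Y^n with all values strictly positive. If the gambler bets the Kelly fractions f_i(y_i | y^{i−1}, x^i) = P(y_i | y^{i−1}, x^i), then the n-th power of the efficacy equals (γ*)^n = ⟨exp[i_{x^n→y^n}]⟩ = Σ_{x^n,y^n} P(x^n,y^n)·P(y^n‖x^n)/P(y^n), and it satisfies the bound ⟨exp[i_{x^n→y^n}]⟩ ≤ M^n, i.e. γ* ≤ M. -/
import Mathlib


/-- The causally conditioned factor `P(y_i | y^{i-1}, x^i)` of the joint distribution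
`P(x^n, y^n)`, evaluated at the pair of sequences `(x, y)`. -/
noncomputable def condY {X Y : Type*} [Fintype X] [Fintype Y] [DecidableEq X]
    [DecidableEq Y] (n : ℕ)
    (P : (Fin n → X) → (Fin n → Y) → ℝ) (i : Fin n)
    (x : Fin n → X) (y : Fin n → Y) : ℝ :=
  (∑ x' : Fin n → X, ∑ y' : Fin n → Y,
      if (∀ j, j ≤ i → x' j = x j) ∧ (∀ j, j ≤ i → y' j = y j) then P x' y' else 0) /
  (∑ x' : Fin n → X, ∑ y' : Fin n → Y,
      if (∀ j, j ≤ i → x' j = x j) ∧ (∀ j, j < i → y' j = y j) then P x' y' else 0)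

lemma condY_pos {X Y : Type*} [Fintype X] [Fintype Y] [DecidableEq X]
    [DecidableEq Y] (n : ℕ)
    (P : (Fin n → X) → (Fin n → Y) → ℝ) (hP : ∀ x y, 0 < P x y) (i : Fin n)
    (x : Fin n → X) (y : Fin n → Y) : 0 < condY n P i x y := by
  unfold condY
  apply div_pos
  · apply Finset.sum_pos'
    · intro x' _
      apply Finset.sum_nonneg
      intro y' _
      split <;> [exact (hP _ _).le; rfl]
    · refine ⟨x, Finset.mem_univ _, Finset.sum_pos' ?_ ⟨y, Finset.mem_univ _, ?_⟩⟩
      · intro y' _; split <;> [exact (hP _ _).le; rfl]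
      · simp [hP]
  · apply Finset.sum_pos'
    · intro x' _
      apply Finset.sum_nonneg
      intro y' _
      split <;> [exact (hP _ _).le; rfl]
    · refine ⟨x, Finset.mem_univ _, Finset.sum_pos' ?_ ⟨y, Finset.mem_univ _, ?_⟩⟩
      · intro y' _; split <;> [exact (hP _ _).le; rfl]
      · simp [hP]

lemma condY_le_one {X Y : Type*} [Fintype X] [Fintype Y] [DecidableEq X]
    [DecidableEq Y] (n : ℕ)
    (P : (Fin n → X) → (Fin n → Y) → ℝ) (hP : ∀ x y, 0 < P x y) (i : Fin n)
    (x : Fin n → X) (y : Fin n → Y) : condY n P i x y ≤ 1 := by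
  unfold condY
  rw [div_le_one]
  · apply Finset.sum_le_sum
    intro x' _
    apply Finset.sum_le_sum
    intro y' _
    split_ifs with h h2 h2
    · exact le_rfl
    · exact absurd ⟨h.1, fun j hj => h.2 j hj.le⟩ h2
    · exact (hP _ _).le
    · rfl
  · apply Finset.sum_pos'
    · intro x' _
      apply Finset.sum_nonneg
      intro y' _
      split <;> [exact (hP _ _).le; rfl]
    · refine ⟨x, Finset.mem_univ _, Finset.sum_pos' ?_ ⟨y, Finset.mem_univ _, ?_⟩⟩
      · intro y' _; split <;> [exact (hP _ _).le; rfl]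
      · simp [hP]

/-- Under the Kelly strategy `f_i(y_i | y^{i-1}, x^i) = P(y_i | y^{i-1}, x^i)` in horse
races with `M = |Y|` horses, the `n`-th power of the efficacy
`(γ*)^n = ⟨exp[n·g_n + s_{y^n} - ln o(y^n)]⟩` equals
`⟨exp[i_{x^n→y^n}]⟩ = Σ_{x^n,y^n} P(x^n,y^n)·P(y^n‖x^n)/P(y^n)`, is bounded by `M^n`,
and hence `γ* ≤ M`. -/
theorem stmt19 {X Y : Type*} [Fintype X] [Fintype Y] [DecidableEq X] [DecidableEq Y]
    (n : ℕ) (hn : 0 < n)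
    (P : (Fin n → X) → (Fin n → Y) → ℝ)
    (hP : ∀ x y, 0 < P x y) (hPsum : ∑ x, ∑ y, P x y = 1)
    (o : Fin n → (Fin n → Y) → ℝ)
    (hopos : ∀ i y, 0 < o i y)
    (hocausal : ∀ (i : Fin n) (y y' : Fin n → Y),
      (∀ j, j ≤ i → y j = y' j) → o i y = o i y') :
    (let E : ℝ := ∑ x, ∑ y, P x y * Real.exp
        ((n : ℝ) * ((1 / (n : ℝ)) * ∑ i, Real.log (condY n P i x y * o i y))
          - Real.log (∑ x', P x' y)
          - Real.log (∏ i, o i y));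
    E = (∑ x, ∑ y, P x y * ((∏ i, condY n P i x y) / (∑ x', P x' y)))
    ∧ E ≤ (Fintype.card Y : ℝ) ^ n
    ∧ E ^ ((1 : ℝ) / (n : ℝ)) ≤ (Fintype.card Y : ℝ)) := by
  have hXne : Nonempty (Fin n → X) := by
    by_contra h
    rw [not_nonempty_iff] at h
    simp at hPsum
  have hYne : Nonempty (Fin n → Y) := by
    by_contra h
    rw [not_nonempty_iff] at h
    simp at hPsum
  have hPY : ∀ y : Fin n → Y, 0 < ∑ x', P x' y := fun y =>
    Finset.sum_pos (fun x _ => hP x y) Finset.univ_nonempty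
  have hO : ∀ y, 0 < ∏ i, o i y := fun y => Finset.prod_pos fun i _ => hopos i y
  have hprodc : ∀ x y, 0 < ∏ i, condY n P i x y := fun x y =>
    Finset.prod_pos fun i _ => condY_pos n P hP i x y
  have hpc1 : ∀ x y, ∏ i, condY n P i x y ≤ 1 := fun x y =>
    Finset.prod_le_one (fun i _ => (condY_pos n P hP i x y).le)
      (fun i _ => condY_le_one n P hP i x y)
  have hnne : (n : ℝ) ≠ 0 := Nat.cast_ne_zero.mpr hn.ne'
  have key : ∀ (x : Fin n → X) (y : Fin n → Y),
      Real.exp ((n : ℝ) * ((1 / (n : ℝ)) * ∑ i, Real.log (condY n P i x y * o i y))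
          - Real.log (∑ x', P x' y) - Real.log (∏ i, o i y))
        = (∏ i, condY n P i x y) / (∑ x', P x' y) := by
    intro x y
    have h1 : (n : ℝ) * ((1 / (n : ℝ)) * ∑ i, Real.log (condY n P i x y * o i y))
        = ∑ i, Real.log (condY n P i x y * o i y) := by
      field_simp
    rw [h1, Real.exp_sub, Real.exp_sub, Real.exp_log (hPY y), Real.exp_log (hO y),
      Real.exp_sum]
    rw [Finset.prod_congr rfl (fun i _ =>
      Real.exp_log (mul_pos (condY_pos n P hP i x y) (hopos i y))),
      Finset.prod_mul_distrib]
    rw [div_div, mul_comm (∑ x', P x' y) (∏ i, o i y), ← div_div,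
      mul_div_assoc, mul_comm, mul_div_assoc, div_self (hO y).ne', one_mul]
  have hEeq : (∑ x, ∑ y, P x y * Real.exp
        ((n : ℝ) * ((1 / (n : ℝ)) * ∑ i, Real.log (condY n P i x y * o i y))
          - Real.log (∑ x', P x' y) - Real.log (∏ i, o i y)))
      = ∑ x, ∑ y, P x y * ((∏ i, condY n P i x y) / (∑ x', P x' y)) := by
    refine Finset.sum_congr rfl fun x _ => Finset.sum_congr rfl fun y _ => ?_
    rw [key x y]
  have hle : (∑ x, ∑ y, P x y * ((∏ i, condY n P i x y) / (∑ x', P x' y)))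
      ≤ (Fintype.card Y : ℝ) ^ n := by
    calc (∑ x, ∑ y, P x y * ((∏ i, condY n P i x y) / (∑ x', P x' y)))
        ≤ ∑ x, ∑ y, P x y * (1 / (∑ x', P x' y)) := by
          refine Finset.sum_le_sum fun x _ => Finset.sum_le_sum fun y _ => ?_
          refine mul_le_mul_of_nonneg_left ?_ (hP x y).le
          exact div_le_div₀ zero_le_one (hpc1 x y) (hPY y) le_rfl
      _ = (Fintype.card Y : ℝ) ^ n := by
          rw [Finset.sum_comm]
          have h2 : ∀ y : Fin n → Y, ∑ x, P x y * (1 / ∑ x', P x' y) = 1 := fun y => by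
            rw [← Finset.sum_mul, mul_one_div, div_self (hPY y).ne']
          simp_rw [h2]
          simp [Fintype.card_fun]
  refine ⟨hEeq, hEeq ▸ hle, ?_⟩
  have hEnn : 0 ≤ ∑ x, ∑ y, P x y * Real.exp
        ((n : ℝ) * ((1 / (n : ℝ)) * ∑ i, Real.log (condY n P i x y * o i y))
          - Real.log (∑ x', P x' y) - Real.log (∏ i, o i y)) := by
    refine Finset.sum_nonneg fun x _ => Finset.sum_nonneg fun y _ => ?_
    exact mul_nonneg (hP x y).le (Real.exp_pos _).le
  calc (∑ x, ∑ y, P x y * Real.exp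
        ((n : ℝ) * ((1 / (n : ℝ)) * ∑ i, Real.log (condY n P i x y * o i y))
          - Real.log (∑ x', P x' y) - Real.log (∏ i, o i y))) ^ ((1 : ℝ) / (n : ℝ))
      ≤ ((Fintype.card Y : ℝ) ^ n) ^ ((1 : ℝ) / (n : ℝ)) := by
        refine Real.rpow_le_rpow hEnn (hEeq ▸ hle) (by positivity)
    _ = (Fintype.card Y : ℝ) := by
        rw [← Real.rpow_natCast (Fintype.card Y : ℝ) n,
          ← Real.rpow_mul (by positivity), mul_one_div, div_self hnne, Real.rpow_one]
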